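/- Fix δ ∈ (0, 1/2], γ, κ ∈ (0,1), α > 0, M > 2/δ and integer k ≥ 3. Let Z̃₁ := α·N₀ + Σ_{i=1}^{N_r} Y_i, where N₀ ∼ Poisson(κ/2), N_r ∼ Poisson(ν_r^{≠}(ℝ)) and the Y_i are i.i.d. with law ν_r^{≠}/ν_r^{≠}(ℝ), all independent. Then there exists a constant C_{δ,M} > 0 depending only on δ and M such that for every Borel set A ⊆ [M, ∞), (ν_r * μ_{−Z̃₁})(A) ≤ (1 + C_{δ,M} γ) exp( κ (e^{αδ} − 1) / 2 ) ν_r(A), where μ_{−Z̃₁} is the law of −Z̃₁ and * is convolution of measures. -/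

import Mathlib

open MeasureTheory Set Real
open scoped ENNReal

/-- The measure `ν_r(dy) = (γ/y²) e^{δy} 1{y > M} dy`. -/
noncomputable def nuR (δ γ M : ℝ) : Measure ℝ :=
  volume.withDensity fun y =>
    ENNReal.ofReal (if M < y then γ / y ^ 2 * Real.exp (δ * y) else 0)

/-- The measure `ν_r^{≠}(dy) = (e^y + (k−1)^{−1})^{−1} ν_r(dy)`. -/
noncomputable def nuRNe (δ γ M : ℝ) (k : ℕ) : Measure ℝ :=
  volume.withDensity fun y =>
    ENNReal.ofReal (if M < y then
      (γ / y ^ 2 * Real.exp (δ * y)) / (Real.exp y + 1 / ((k : ℝ) - 1)) else 0)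

/-- The convolution of two measures on `ℝ` (law of the sum of independent samples). -/
noncomputable def mconv (μ ν : Measure ℝ) : Measure ℝ :=
  μ.bind fun x => ν.map (x + ·)

/-- The `n`-fold convolution of a measure on `ℝ`. -/
noncomputable def nconv (μ : Measure ℝ) : ℕ → Measure ℝ
  | 0 => Measure.dirac 0
  | n + 1 => mconv μ (nconv μ n)

/-- `Pois(λ) ⊗ μ`: the law of `Σ_{i=1}^N Y_i` where `N ∼ Poisson(λ)` and the `Y_i`
are i.i.d. with (probability) law `μ`, independent of `N`. -/
noncomputable def compoundPoisson (lam : ℝ) (μ : Measure ℝ) : Measure ℝ :=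
  Measure.sum fun n : ℕ =>
    ENNReal.ofReal (Real.exp (-lam) * lam ^ n / n.factorial) • nconv μ n

/-- The law of `α · N` where `N ∼ Poisson(κ)`. -/
noncomputable def scaledPoissonLaw (κ α : ℝ) : Measure ℝ :=
  Measure.sum fun n : ℕ =>
    ENNReal.ofReal (Real.exp (-κ) * κ ^ n / n.factorial) • Measure.dirac (α * (n : ℝ))

/-- The law of `Z̃₁ := α·N₀ + Σ_{i=1}^{N_r} Y_i`, where `N₀ ∼ Poisson(κ/2)`,
`N_r ∼ Poisson(ν_r^{≠}(ℝ))` and the `Y_i` are i.i.d. with law `ν_r^{≠}/ν_r^{≠}(ℝ)`,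
all independent. -/
noncomputable def Z1Law (δ γ κ α M : ℝ) (k : ℕ) : Measure ℝ :=
  mconv (scaledPoissonLaw (κ / 2) α)
    (compoundPoisson ((nuRNe δ γ M k) Set.univ).toReal
      ((nuRNe δ γ M k Set.univ)⁻¹ • nuRNe δ γ M k))

/-! ### Auxiliary lemmas -/

section Aux

lemma measurable_map_add (ν : Measure ℝ) [SFinite ν] :
    Measurable fun x : ℝ => ν.map (x + ·) := by
  apply Measure.measurable_of_measurable_coe
  intro s hs
  have h1 : ∀ x : ℝ, ν.map (x + ·) s = ν (Prod.mk x ⁻¹' {p : ℝ × ℝ | p.1 + p.2 ∈ s}) := by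
    intro x
    rw [Measure.map_apply (measurable_const_add x) hs]
    rfl
  simp_rw [h1]
  exact measurable_measure_prodMk_left ((measurable_fst.add measurable_snd) hs)

lemma mconv_apply (μ ν : Measure ℝ) [SFinite ν] {A : Set ℝ} (hA : MeasurableSet A) :
    mconv μ ν A = ∫⁻ x, ν ((x + ·) ⁻¹' A) ∂μ := by
  rw [mconv, Measure.bind_apply hA (measurable_map_add ν).aemeasurable]
  refine lintegral_congr fun x => ?_
  rw [Measure.map_apply (measurable_const_add x) hA]

lemma mconv_eq_map (μ ν : Measure ℝ) [SFinite μ] [SFinite ν] :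
    mconv μ ν = Measure.map (fun p : ℝ × ℝ => p.1 + p.2) (μ.prod ν) := by
  ext s hs
  rw [mconv_apply μ ν hs, Measure.map_apply (show Measurable fun p : ℝ × ℝ => p.1 + p.2 from measurable_fst.add measurable_snd) hs,
    Measure.prod_apply ((show Measurable fun p : ℝ × ℝ => p.1 + p.2 from measurable_fst.add measurable_snd) hs)]
  rfl

instance mconv_sfinite (μ ν : Measure ℝ) [SFinite μ] [SFinite ν] : SFinite (mconv μ ν) := by
  rw [mconv_eq_map]; infer_instance

lemma mconv_comm (μ ν : Measure ℝ) [SFinite μ] [SFinite ν] : mconv μ ν = mconv ν μ := by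
  rw [mconv_eq_map, mconv_eq_map, ← Measure.prod_swap]
  rw [Measure.map_map (show Measurable fun p : ℝ × ℝ => p.1 + p.2 from measurable_fst.add measurable_snd) measurable_swap]
  congr 1
  ext p
  exact add_comm _ _

lemma lintegral_mconv (μ ν : Measure ℝ) [SFinite ν] {g : ℝ → ℝ≥0∞} (hg : Measurable g) :
    ∫⁻ z, g z ∂(mconv μ ν) = ∫⁻ x, ∫⁻ y, g (x + y) ∂ν ∂μ := by
  rw [mconv, Measure.lintegral_bind (measurable_map_add ν).aemeasurable hg.aemeasurable]
  refine lintegral_congr fun x => ?_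
  rw [lintegral_map hg (measurable_const_add x)]

instance nconv_sfinite (μ : Measure ℝ) [SFinite μ] (n : ℕ) : SFinite (nconv μ n) := by
  induction n with
  | zero => exact inferInstanceAs (SFinite (Measure.dirac 0))
  | succ n ih => exact inferInstanceAs (SFinite (mconv μ (nconv μ n)))

/-- The exponential moment functional. -/
noncomputable def Eδ (δ : ℝ) (μ : Measure ℝ) : ℝ≥0∞ :=
  ∫⁻ z, ENNReal.ofReal (Real.exp (δ * z)) ∂μ

lemma measurable_expδ (δ : ℝ) : Measurable fun z : ℝ => ENNReal.ofReal (Real.exp (δ * z)) :=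
  (Real.measurable_exp.comp (measurable_id.const_mul δ)).ennreal_ofReal

lemma Eδ_mconv (δ : ℝ) (μ ν : Measure ℝ) [SFinite ν] :
    Eδ δ (mconv μ ν) = Eδ δ μ * Eδ δ ν := by
  rw [Eδ, lintegral_mconv μ ν (measurable_expδ δ)]
  have h1 : ∀ x y : ℝ, ENNReal.ofReal (Real.exp (δ * (x + y)))
      = ENNReal.ofReal (Real.exp (δ * x)) * ENNReal.ofReal (Real.exp (δ * y)) := by
    intro x y
    rw [mul_add, Real.exp_add, ENNReal.ofReal_mul (Real.exp_nonneg _)]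
  simp_rw [h1]
  calc ∫⁻ x, ∫⁻ y, ENNReal.ofReal (Real.exp (δ * x)) * ENNReal.ofReal (Real.exp (δ * y)) ∂ν ∂μ
      = ∫⁻ x, ENNReal.ofReal (Real.exp (δ * x)) * Eδ δ ν ∂μ := by
        refine lintegral_congr fun x => ?_
        rw [lintegral_const_mul _ (measurable_expδ δ)]; rfl
    _ = Eδ δ μ * Eδ δ ν := lintegral_mul_const _ (measurable_expδ δ)

lemma Eδ_dirac (δ c : ℝ) : Eδ δ (Measure.dirac c) = ENNReal.ofReal (Real.exp (δ * c)) := by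
  rw [Eδ, lintegral_dirac]

lemma Eδ_nconv (δ : ℝ) (μ : Measure ℝ) [SFinite μ] (n : ℕ) :
    Eδ δ (nconv μ n) = (Eδ δ μ) ^ n := by
  induction n with
  | zero =>
      show Eδ δ (Measure.dirac 0) = _
      rw [Eδ_dirac, mul_zero, Real.exp_zero, ENNReal.ofReal_one, pow_zero]
  | succ n ih =>
      show Eδ δ (mconv μ (nconv μ n)) = _
      rw [Eδ_mconv, ih, pow_succ, mul_comm]

lemma Eδ_smul (δ : ℝ) (c : ℝ≥0∞) (μ : Measure ℝ) : Eδ δ (c • μ) = c * Eδ δ μ := by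
  rw [Eδ, Eδ, lintegral_smul_measure, smul_eq_mul]

lemma Eδ_sum (δ : ℝ) (μ : ℕ → Measure ℝ) : Eδ δ (Measure.sum μ) = ∑' n, Eδ δ (μ n) := by
  rw [Eδ, lintegral_sum_measure]; rfl

lemma real_exp_tsum (x : ℝ) : ∑' n : ℕ, x ^ n / (n.factorial : ℝ) = Real.exp x := by
  rw [Real.exp_eq_exp_ℝ, NormedSpace.exp_eq_tsum_div]

lemma measurable_shift_meas (ν : Measure ℝ) [SFinite ν] {A : Set ℝ} (hA : MeasurableSet A) :
    Measurable fun x : ℝ => ν ((x + ·) ⁻¹' A) := by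
  have h1 : ∀ x : ℝ, ν ((x + ·) ⁻¹' A) = ν.map (x + ·) A := fun x =>
    (Measure.map_apply (measurable_const_add x) hA).symm
  simp_rw [h1]
  exact (Measure.measurable_coe hA).comp (measurable_map_add ν)

lemma mconv_neg_null (μ ν : Measure ℝ) [SFinite ν]
    (hμ : μ {z : ℝ | z < 0} = 0) (hν : ν {z : ℝ | z < 0} = 0) :
    mconv μ ν {z : ℝ | z < 0} = 0 := by
  have hIio : MeasurableSet {z : ℝ | z < 0} := measurableSet_Iio
  rw [mconv_apply μ ν hIio]
  rw [lintegral_eq_zero_iff (measurable_shift_meas ν hIio)]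
  have h0 : ∀ᵐ x ∂μ, 0 ≤ x := by
    rw [ae_iff]
    convert hμ using 2
    ext x; simp [not_le]
  filter_upwards [h0] with x hx
  have hsub : (x + ·) ⁻¹' {z : ℝ | z < 0} ⊆ {z : ℝ | z < 0} := by
    intro y hy
    simp only [mem_preimage, mem_setOf_eq] at hy ⊢
    linarith
  exact le_antisymm (le_trans (measure_mono hsub) hν.le) zero_le

lemma measurable_fR (δ γ M : ℝ) :
    Measurable fun y : ℝ => ENNReal.ofReal (if M < y then γ / y ^ 2 * Real.exp (δ * y) else 0) := by
  apply Measurable.ennreal_ofReal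
  apply Measurable.ite measurableSet_Ioi _ measurable_const
  exact (measurable_const.div (measurable_id.pow_const 2)).mul
      (Real.measurable_exp.comp (measurable_id.const_mul δ))

instance nuR_sfinite (δ γ M : ℝ) : SFinite (nuR δ γ M) :=
  inferInstanceAs (SFinite (volume.withDensity _))

instance nuRNe_sfinite (δ γ M : ℝ) (k : ℕ) : SFinite (nuRNe δ γ M k) :=
  inferInstanceAs (SFinite (volume.withDensity _))

lemma nuR_shift (δ γ M : ℝ) (hγ : 0 ≤ γ) (hM0 : 0 < M)
    {A : Set ℝ} (hA : MeasurableSet A) (hAM : A ⊆ Ici M) {w : ℝ} (hw : 0 ≤ w) :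
    nuR δ γ M ((-w + ·) ⁻¹' A) ≤ ENNReal.ofReal (Real.exp (δ * w)) * nuR δ γ M A := by
  set F : ℝ → ℝ≥0∞ := fun y =>
    ENNReal.ofReal (if M < y then γ / y ^ 2 * Real.exp (δ * y) else 0) with hF
  have hFm : Measurable F := measurable_fR δ γ M
  have hS : MeasurableSet ((-w + ·) ⁻¹' A) := (measurable_const_add (-w)) hA
  rw [nuR, withDensity_apply _ hS, withDensity_apply _ hA]
  calc ∫⁻ x in (-w + ·) ⁻¹' A, F x ∂volume
      = ∫⁻ x, ((-w + ·) ⁻¹' A).indicator F x ∂volume := (lintegral_indicator hS F).symm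
    _ = ∫⁻ a, ((-w + ·) ⁻¹' A).indicator F (a + w) ∂volume := by
        conv_lhs => rw [← map_add_right_eq_self volume w]
        rw [lintegral_map (hFm.indicator hS) (measurable_add_const w)]
    _ = ∫⁻ a, A.indicator (fun a => F (a + w)) a ∂volume := by
        refine lintegral_congr fun a => ?_
        by_cases h : a ∈ A
        · have : a + w ∈ (-w + ·) ⁻¹' A := by
            simp only [mem_preimage]; convert h using 1; ring
          rw [indicator_of_mem this, indicator_of_mem h]
        · have : a + w ∉ (-w + ·) ⁻¹' A := by
            simp only [mem_preimage]
            convert h using 2; ring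
          rw [indicator_of_notMem this, indicator_of_notMem h]
    _ ≤ ∫⁻ a, ENNReal.ofReal (Real.exp (δ * w)) * A.indicator F a ∂volume := by
        refine lintegral_mono_ae ?_
        have hMnull : ∀ᵐ a : ℝ ∂volume, a ≠ M := by
          rw [ae_iff]
          simpa using measure_singleton (M : ℝ)
        filter_upwards [hMnull] with a haM
        by_cases h : a ∈ A
        · rw [indicator_of_mem h, indicator_of_mem h]
          have haM' : M < a := lt_of_le_of_ne (hAM h) (Ne.symm haM)
          have h1 : M < a + w := by linarith
          rw [hF]
          simp only [if_pos haM', if_pos h1]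
          rw [← ENNReal.ofReal_mul (Real.exp_nonneg _)]
          apply ENNReal.ofReal_le_ofReal
          have hMa : 0 < a := lt_trans hM0 haM'
          have h2 : γ / (a + w) ^ 2 ≤ γ / a ^ 2 :=
            div_le_div_of_nonneg_left hγ (by positivity) (by nlinarith)
          calc γ / (a + w) ^ 2 * Real.exp (δ * (a + w))
              ≤ γ / a ^ 2 * Real.exp (δ * (a + w)) :=
                mul_le_mul_of_nonneg_right h2 (Real.exp_nonneg _)
            _ = Real.exp (δ * w) * (γ / a ^ 2 * Real.exp (δ * a)) := by
                rw [mul_add, Real.exp_add]; ring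
        · rw [indicator_of_notMem h, indicator_of_notMem h, mul_zero]
    _ = ENNReal.ofReal (Real.exp (δ * w)) * ∫⁻ a, A.indicator F a ∂volume :=
        lintegral_const_mul _ (hFm.indicator hA)
    _ = ENNReal.ofReal (Real.exp (δ * w)) * ∫⁻ a in A, F a ∂volume := by
        rw [lintegral_indicator hA]

lemma lint_inv_sq (γ M : ℝ) (hγ : 0 ≤ γ) (hM0 : 0 < M) :
    ∫⁻ y, ENNReal.ofReal (if M < y then γ / y ^ 2 else 0) ∂volume = ENNReal.ofReal (γ / M) := by
  have h1 : (fun y : ℝ => ENNReal.ofReal (if M < y then γ / y ^ 2 else 0))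
      = (Ioi M).indicator fun y => ENNReal.ofReal (γ / y ^ 2) := by
    funext y; by_cases h : M < y <;> simp [h, indicator, mem_Ioi]
  rw [h1, lintegral_indicator measurableSet_Ioi]
  have heq : EqOn (fun y : ℝ => γ * y ^ (-2 : ℝ)) (fun y : ℝ => γ / y ^ 2) (Ioi M) := by
    intro y hy
    have hy0 : 0 < y := lt_trans hM0 hy
    simp only
    rw [Real.rpow_neg hy0.le, show ((2:ℝ) = ((2:ℕ):ℝ)) by norm_num, Real.rpow_natCast]
    rw [div_eq_mul_inv]
  have hint : IntegrableOn (fun y : ℝ => γ / y ^ 2) (Ioi M) := by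
    have h2 := (integrableOn_Ioi_rpow_of_lt (by norm_num : (-2:ℝ) < -1) hM0).const_mul γ
    exact IntegrableOn.congr_fun h2 heq measurableSet_Ioi
  rw [← ofReal_integral_eq_lintegral_ofReal hint
      (ae_of_all _ fun y => div_nonneg hγ (sq_nonneg y))]
  congr 1
  rw [← setIntegral_congr_fun measurableSet_Ioi heq, integral_const_mul,
    integral_Ioi_rpow_of_lt (by norm_num : (-2:ℝ) < -1) hM0]
  norm_num
  rw [Real.rpow_neg_one, div_eq_mul_inv]

lemma measurable_gf (δ γ M : ℝ) (k : ℕ) :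
    Measurable fun y : ℝ => ENNReal.ofReal (if M < y then
      (γ / y ^ 2 * Real.exp (δ * y)) / (Real.exp y + 1 / ((k : ℝ) - 1)) else 0) := by
  apply Measurable.ennreal_ofReal
  apply Measurable.ite measurableSet_Ioi _ measurable_const
  exact ((measurable_const.div (measurable_id.pow_const 2)).mul
      (Real.measurable_exp.comp (measurable_id.const_mul δ))).div
      ((Real.measurable_exp.comp measurable_id).add measurable_const)

lemma gf_pointwise {δ γ M : ℝ} {k : ℕ} (hδ0 : 0 < δ) (hδ : δ ≤ 1 / 2) (hM0 : 0 < M)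
    (hγ : 0 ≤ γ) (hk : 3 ≤ k) (y : ℝ) :
    Real.exp (δ * y) * (if M < y then
      (γ / y ^ 2 * Real.exp (δ * y)) / (Real.exp y + 1 / ((k : ℝ) - 1)) else 0)
    ≤ (if M < y then γ / y ^ 2 else 0) := by
  by_cases h : M < y
  · simp only [if_pos h]
    have hy0 : 0 < y := lt_trans hM0 h
    have hk1 : (0:ℝ) < (k : ℝ) - 1 := by
      have : (3:ℝ) ≤ (k:ℝ) := by exact_mod_cast hk
      linarith
    have hD : Real.exp y ≤ Real.exp y + 1 / ((k : ℝ) - 1) :=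
      le_add_of_nonneg_right (by positivity)
    have hN : 0 ≤ γ / y ^ 2 * Real.exp (δ * y) := by positivity
    have h1 : (γ / y ^ 2 * Real.exp (δ * y)) / (Real.exp y + 1 / ((k : ℝ) - 1))
        ≤ (γ / y ^ 2 * Real.exp (δ * y)) / Real.exp y :=
      div_le_div_of_nonneg_left hN (Real.exp_pos y) hD
    calc Real.exp (δ * y) * ((γ / y ^ 2 * Real.exp (δ * y)) / (Real.exp y + 1 / ((k : ℝ) - 1)))
        ≤ Real.exp (δ * y) * ((γ / y ^ 2 * Real.exp (δ * y)) / Real.exp y) :=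
          mul_le_mul_of_nonneg_left h1 (Real.exp_nonneg _)
      _ = γ / y ^ 2 * Real.exp (δ * y + δ * y - y) := by
          rw [Real.exp_sub, Real.exp_add]; ring
      _ ≤ γ / y ^ 2 * 1 := by
          apply mul_le_mul_of_nonneg_left _ (by positivity)
          rw [Real.exp_le_one_iff]
          nlinarith
      _ = γ / y ^ 2 := mul_one _
  · simp [if_neg h]

lemma gf_pointwise' {δ γ M : ℝ} {k : ℕ} (hδ0 : 0 < δ) (hδ : δ ≤ 1 / 2) (hM0 : 0 < M)
    (hγ : 0 ≤ γ) (hk : 3 ≤ k) (y : ℝ) :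
    (if M < y then
      (γ / y ^ 2 * Real.exp (δ * y)) / (Real.exp y + 1 / ((k : ℝ) - 1)) else 0)
    ≤ (if M < y then γ / y ^ 2 else 0) := by
  by_cases hy : M < y
  · simp only [if_pos hy]
    have hy0 : 0 < y := lt_trans hM0 hy
    have hk1 : (0:ℝ) < (k : ℝ) - 1 := by
      have : (3:ℝ) ≤ (k:ℝ) := by exact_mod_cast hk
      linarith
    have hN : 0 ≤ γ / y ^ 2 * Real.exp (δ * y) := by positivity
    have hle : Real.exp (δ * y) ≤ Real.exp y + 1 / ((k : ℝ) - 1) := by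
      have h1 : Real.exp (δ * y) ≤ Real.exp y := by
        apply Real.exp_le_exp.2; nlinarith
      have : (0:ℝ) ≤ 1 / ((k : ℝ) - 1) := by positivity
      linarith
    calc (γ / y ^ 2 * Real.exp (δ * y)) / (Real.exp y + 1 / ((k : ℝ) - 1))
        ≤ (γ / y ^ 2 * Real.exp (δ * y)) / Real.exp (δ * y) :=
          div_le_div_of_nonneg_left hN (Real.exp_pos _) hle
      _ = γ / y ^ 2 := by
          rw [mul_div_assoc, div_self (Real.exp_ne_zero _), mul_one]
  · simp [if_neg hy]

end Aux

lemma nuRNe_univ_le {δ γ M : ℝ} {k : ℕ} (hδ0 : 0 < δ) (hδ : δ ≤ 1 / 2) (hM0 : 0 < M)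
    (hγ : 0 ≤ γ) (hk : 3 ≤ k) :
    nuRNe δ γ M k Set.univ ≤ ENNReal.ofReal (γ / M) := by
  rw [nuRNe, withDensity_apply _ MeasurableSet.univ, Measure.restrict_univ]
  calc ∫⁻ y, ENNReal.ofReal (if M < y then
        (γ / y ^ 2 * Real.exp (δ * y)) / (Real.exp y + 1 / ((k : ℝ) - 1)) else 0) ∂volume
      ≤ ∫⁻ y, ENNReal.ofReal (if M < y then γ / y ^ 2 else 0) ∂volume :=
        lintegral_mono fun y => ENNReal.ofReal_le_ofReal (gf_pointwise' hδ0 hδ hM0 hγ hk y)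
    _ = ENNReal.ofReal (γ / M) := lint_inv_sq γ M hγ hM0

lemma nuRNe_univ_pos {δ γ M : ℝ} {k : ℕ} (hδ0 : 0 < δ) (hM0 : 0 < M)
    (hγ0 : 0 < γ) (hk : 3 ≤ k) :
    0 < nuRNe δ γ M k Set.univ := by
  have hk1 : (0:ℝ) < (k : ℝ) - 1 := by
    have : (3:ℝ) ≤ (k:ℝ) := by exact_mod_cast hk
    linarith
  set c : ℝ := γ / (M + 1) ^ 2 * Real.exp (δ * M) / (Real.exp (M + 1) + 1) with hc
  have hc0 : 0 < c := by positivity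
  have key : ENNReal.ofReal c * volume (Ioo M (M + 1)) ≤ nuRNe δ γ M k Set.univ := by
    rw [nuRNe, withDensity_apply _ MeasurableSet.univ, Measure.restrict_univ]
    calc ENNReal.ofReal c * volume (Ioo M (M + 1))
        = ∫⁻ _ in Ioo M (M + 1), ENNReal.ofReal c ∂volume := (setLIntegral_const _ _).symm
      _ ≤ ∫⁻ y in Ioo M (M + 1), ENNReal.ofReal (if M < y then
            (γ / y ^ 2 * Real.exp (δ * y)) / (Real.exp y + 1 / ((k : ℝ) - 1)) else 0) ∂volume := by
          refine setLIntegral_mono (measurable_gf δ γ M k) fun y hy => ?_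
          obtain ⟨hy1, hy2⟩ := hy
          apply ENNReal.ofReal_le_ofReal
          rw [if_pos hy1, hc]
          have hy0 : 0 < y := lt_trans hM0 hy1
          have hnum : γ / (M + 1) ^ 2 * Real.exp (δ * M) ≤ γ / y ^ 2 * Real.exp (δ * y) := by
            apply mul_le_mul _ (Real.exp_le_exp.2 (by nlinarith)) (Real.exp_nonneg _)
              (by positivity)
            exact div_le_div_of_nonneg_left hγ0.le (by positivity) (by nlinarith)
          have hden : Real.exp y + 1 / ((k : ℝ) - 1) ≤ Real.exp (M + 1) + 1 := by
            have h1 : Real.exp y ≤ Real.exp (M + 1) := Real.exp_le_exp.2 hy2.le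
            have h2 : 1 / ((k : ℝ) - 1) ≤ 1 := by
              rw [div_le_one hk1]
              have : (3:ℝ) ≤ (k:ℝ) := by exact_mod_cast hk
              linarith
            linarith
          exact div_le_div₀ (by positivity) hnum (by positivity) hden
      _ ≤ ∫⁻ y, ENNReal.ofReal (if M < y then
            (γ / y ^ 2 * Real.exp (δ * y)) / (Real.exp y + 1 / ((k : ℝ) - 1)) else 0) ∂volume :=
          setLIntegral_le_lintegral _ _
  have hvol : volume (Ioo M (M + 1)) = 1 := by
    rw [Real.volume_Ioo]
    norm_num
  refine lt_of_lt_of_le ?_ key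
  rw [hvol, mul_one]
  exact ENNReal.ofReal_pos.2 hc0

lemma gf_nonneg {δ γ M : ℝ} {k : ℕ} (hγ : 0 ≤ γ) (hk : 3 ≤ k) (y : ℝ) :
    0 ≤ (if M < y then
      (γ / y ^ 2 * Real.exp (δ * y)) / (Real.exp y + 1 / ((k : ℝ) - 1)) else 0) := by
  have hk1 : (0:ℝ) < (k : ℝ) - 1 := by
    have : (3:ℝ) ≤ (k:ℝ) := by exact_mod_cast hk
    linarith
  by_cases h : M < y
  · rw [if_pos h]
    have := Real.exp_pos y
    positivity
  · rw [if_neg h]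

lemma Eδ_nuRNe_le {δ γ M : ℝ} {k : ℕ} (hδ0 : 0 < δ) (hδ : δ ≤ 1 / 2) (hM0 : 0 < M)
    (hγ : 0 ≤ γ) (hk : 3 ≤ k) :
    Eδ δ (nuRNe δ γ M k) ≤ ENNReal.ofReal (γ / M) := by
  rw [Eδ, nuRNe,
    lintegral_withDensity_eq_lintegral_mul volume (measurable_gf δ γ M k) (measurable_expδ δ)]
  calc ∫⁻ y, ((fun y => ENNReal.ofReal (if M < y then
          (γ / y ^ 2 * Real.exp (δ * y)) / (Real.exp y + 1 / ((k : ℝ) - 1)) else 0)) *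
          fun z => ENNReal.ofReal (Real.exp (δ * z))) y ∂volume
      ≤ ∫⁻ y, ENNReal.ofReal (if M < y then γ / y ^ 2 else 0) ∂volume := by
        refine lintegral_mono fun y => ?_
        simp only [Pi.mul_apply]
        rw [← ENNReal.ofReal_mul (gf_nonneg hγ hk y)]
        apply ENNReal.ofReal_le_ofReal
        rw [mul_comm]
        exact gf_pointwise hδ0 hδ hM0 hγ hk y
    _ = ENNReal.ofReal (γ / M) := lint_inv_sq γ M hγ hM0

/-- Bound for the compound-Poisson exponential moment. -/
lemma Eδ_cp_le {δ : ℝ} {ν : Measure ℝ} [SFinite ν] {T' b r : ℝ}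
    (hT' : 0 < T') (hb : 0 ≤ b) (hm : Eδ δ ν ≤ ENNReal.ofReal b) (hr : T' * b ≤ r) :
    Eδ δ (compoundPoisson T' ν) ≤ ENNReal.ofReal (Real.exp r) := by
  rw [compoundPoisson, Eδ_sum]
  simp_rw [Eδ_smul, Eδ_nconv]
  calc ∑' n, ENNReal.ofReal (Real.exp (-T') * T' ^ n / n.factorial) * (Eδ δ ν) ^ n
      ≤ ∑' n, ENNReal.ofReal (Real.exp (-T') * T' ^ n / n.factorial) * (ENNReal.ofReal b) ^ n :=
        ENNReal.tsum_le_tsum fun n => mul_le_mul_right (pow_le_pow_left' hm n) _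
    _ = ∑' n, ENNReal.ofReal (Real.exp (-T') * ((T' * b) ^ n / n.factorial)) := by
        refine tsum_congr fun n => ?_
        rw [← ENNReal.ofReal_pow hb, ← ENNReal.ofReal_mul (by positivity)]
        congr 1
        rw [mul_pow]; ring
    _ = ENNReal.ofReal (∑' n, Real.exp (-T') * ((T' * b) ^ n / n.factorial)) := by
        rw [ENNReal.ofReal_tsum_of_nonneg (fun n => by positivity)
          ((Real.summable_pow_div_factorial _).mul_left _)]
    _ ≤ ENNReal.ofReal (Real.exp r) := by
        apply ENNReal.ofReal_le_ofReal
        rw [tsum_mul_left, real_exp_tsum, ← Real.exp_add]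
        apply Real.exp_le_exp.2
        linarith
/-- The scaled-Poisson exponential moment. -/
lemma Eδ_sp {δ κ α : ℝ} (hκ0 : 0 < κ) :
    Eδ δ (scaledPoissonLaw (κ / 2) α) =
      ENNReal.ofReal (Real.exp (κ * (Real.exp (α * δ) - 1) / 2)) := by
  rw [scaledPoissonLaw, Eδ_sum]
  simp_rw [Eδ_smul, Eδ_dirac]
  calc ∑' n : ℕ, ENNReal.ofReal (Real.exp (-(κ/2)) * (κ/2) ^ n / n.factorial) *
        ENNReal.ofReal (Real.exp (δ * (α * n)))
      = ∑' n : ℕ, ENNReal.ofReal (Real.exp (-(κ/2)) * ((κ/2 * Real.exp (δ * α)) ^ n / n.factorial)) := by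
        refine tsum_congr fun n => ?_
        rw [← ENNReal.ofReal_mul (by positivity)]
        congr 1
        have h1 : Real.exp (δ * (α * (n:ℝ))) = Real.exp (δ * α) ^ n := by
          rw [show δ * (α * (n:ℝ)) = (n:ℝ) * (δ * α) by ring, Real.exp_nat_mul]
        rw [h1, mul_pow]; ring
    _ = ENNReal.ofReal (∑' n : ℕ, Real.exp (-(κ/2)) * ((κ/2 * Real.exp (δ * α)) ^ n / n.factorial)) := by
        rw [ENNReal.ofReal_tsum_of_nonneg (fun n => by positivity)
          ((Real.summable_pow_div_factorial _).mul_left _)]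
    _ = ENNReal.ofReal (Real.exp (κ * (Real.exp (α * δ) - 1) / 2)) := by
        rw [tsum_mul_left, real_exp_tsum, ← Real.exp_add]
        congr 1
        rw [mul_comm α δ]
        ring

instance compoundPoisson_sfinite (lam : ℝ) (μ : Measure ℝ) [SFinite μ] :
    SFinite (compoundPoisson lam μ) :=
  inferInstanceAs (SFinite (Measure.sum _))

instance scaledPoissonLaw_sfinite (κ α : ℝ) : SFinite (scaledPoissonLaw κ α) :=
  inferInstanceAs (SFinite (Measure.sum _))

instance Z1Law_sfinite (δ γ κ α M : ℝ) (k : ℕ) : SFinite (Z1Law δ γ κ α M k) :=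
  inferInstanceAs (SFinite (mconv _ _))

lemma Z1Law_neg_null {δ γ κ α M : ℝ} {k : ℕ} (hM0 : 0 < M) (hα : 0 ≤ α) :
    Z1Law δ γ κ α M k {z : ℝ | z < 0} = 0 := by
  have hS : MeasurableSet {z : ℝ | z < 0} := measurableSet_Iio
  have hsp : scaledPoissonLaw (κ / 2) α {z : ℝ | z < 0} = 0 := by
    rw [scaledPoissonLaw, Measure.sum_apply _ hS]
    have h0 : ∀ n : ℕ, (ENNReal.ofReal (Real.exp (-(κ/2)) * (κ/2) ^ n / n.factorial) •
        Measure.dirac (α * (n : ℝ))) {z : ℝ | z < 0} = 0 := by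
      intro n
      rw [Measure.smul_apply, Measure.dirac_apply' _ hS,
        indicator_of_notMem (by simp only [mem_setOf_eq, not_lt]; positivity)]
      simp
    simp [h0]
  have hν0 : nuRNe δ γ M k {z : ℝ | z < 0} = 0 := by
    rw [nuRNe, withDensity_apply _ hS]
    rw [setLIntegral_congr_fun hS (fun y hy => ?_), lintegral_zero]
    have : ¬ M < y := by
      simp only [mem_setOf_eq] at hy
      linarith
    simp [this]
  have hsm : ((nuRNe δ γ M k Set.univ)⁻¹ • nuRNe δ γ M k) {z : ℝ | z < 0} = 0 := by
    rw [Measure.smul_apply, hν0, smul_zero]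
  have hn : ∀ n, nconv ((nuRNe δ γ M k Set.univ)⁻¹ • nuRNe δ γ M k) n {z : ℝ | z < 0} = 0 := by
    intro n
    induction n with
    | zero =>
        show Measure.dirac 0 {z : ℝ | z < 0} = 0
        rw [Measure.dirac_apply' _ hS, indicator_of_notMem (by simp)]
    | succ n ih =>
        exact mconv_neg_null _ _ hsm ih
  have hcp : compoundPoisson ((nuRNe δ γ M k) Set.univ).toReal
      ((nuRNe δ γ M k Set.univ)⁻¹ • nuRNe δ γ M k) {z : ℝ | z < 0} = 0 := by
    rw [compoundPoisson, Measure.sum_apply _ hS]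
    simp [Measure.smul_apply, hn]
  exact mconv_neg_null _ _ hsp hcp

/-- Fix `δ ∈ (0,1/2]`, `M > 2/δ`.  There is a constant
`C_{δ,M} > 0`, depending only on `δ` and `M`, such that for all `γ, κ ∈ (0,1)`, `α > 0`
and integers `k ≥ 3`, and every Borel `A ⊆ [M,∞)`,
`(ν_r * μ_{−Z̃₁})(A) ≤ (1 + C_{δ,M} γ) exp(κ(e^{αδ}−1)/2) ν_r(A)`. -/
theorem stmt10 (δ M : ℝ) (hδ0 : 0 < δ) (hδ : δ ≤ 1 / 2) (hM : 2 / δ < M) :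
    ∃ C : ℝ, 0 < C ∧
      ∀ (γ κ α : ℝ) (k : ℕ),
        γ ∈ Ioo (0 : ℝ) 1 → κ ∈ Ioo (0 : ℝ) 1 → 0 < α → 3 ≤ k →
        ∀ A : Set ℝ, MeasurableSet A → A ⊆ Ici M →
          mconv (nuR δ γ M) (Measure.map Neg.neg (Z1Law δ γ κ α M k)) A
            ≤ ENNReal.ofReal ((1 + C * γ) * Real.exp (κ * (Real.exp (α * δ) - 1) / 2)) *
                nuR δ γ M A := by
  have hM0 : 0 < M := lt_trans (by positivity) hM
  refine ⟨Real.exp (1 / M) / M, by positivity, ?_⟩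
  intro γ κ α k hγI hκI hα hk A hA hAM
  obtain ⟨hγ0, hγ1⟩ := hγI
  obtain ⟨hκ0, hκ1⟩ := hκI
  -- facts about the total mass
  have hTle := nuRNe_univ_le (δ := δ) (γ := γ) (M := M) (k := k) hδ0 hδ hM0 hγ0.le hk
  have hTpos := nuRNe_univ_pos (δ := δ) (γ := γ) (M := M) (k := k) hδ0 hM0 hγ0 hk
  have hTne : nuRNe δ γ M k Set.univ ≠ ⊤ := ne_top_of_le_ne_top ENNReal.ofReal_ne_top hTle
  set T' : ℝ := ((nuRNe δ γ M k) Set.univ).toReal with hT'def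
  have hT'pos : 0 < T' := ENNReal.toReal_pos hTpos.ne' hTne
  -- the normalized jump measure has exponential moment ≤ 1 + γ/(M T')
  have hTinv : (nuRNe δ γ M k Set.univ)⁻¹ = ENNReal.ofReal T'⁻¹ := by
    rw [ENNReal.ofReal_inv_of_pos hT'pos, hT'def, ENNReal.ofReal_toReal hTne]
  have hm : Eδ δ ((nuRNe δ γ M k Set.univ)⁻¹ • nuRNe δ γ M k)
      ≤ ENNReal.ofReal (T'⁻¹ * (γ / M)) := by
    rw [Eδ_smul, hTinv]
    calc ENNReal.ofReal T'⁻¹ * Eδ δ (nuRNe δ γ M k)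
        ≤ ENNReal.ofReal T'⁻¹ * ENNReal.ofReal (γ / M) :=
          mul_le_mul_right (Eδ_nuRNe_le hδ0 hδ hM0 hγ0.le hk) _
      _ = ENNReal.ofReal (T'⁻¹ * (γ / M)) :=
          (ENNReal.ofReal_mul (by positivity)).symm
  have hcp : Eδ δ (compoundPoisson T' ((nuRNe δ γ M k Set.univ)⁻¹ • nuRNe δ γ M k))
      ≤ ENNReal.ofReal (Real.exp (γ / M)) :=
    Eδ_cp_le hT'pos (by positivity) hm (le_of_eq (by field_simp))
  -- exponential moment of Z1
  have hEZ : Eδ δ (Z1Law δ γ κ α M k)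
      ≤ ENNReal.ofReal (Real.exp (κ * (Real.exp (α * δ) - 1) / 2) * Real.exp (γ / M)) := by
    have hzeq : Z1Law δ γ κ α M k = mconv (scaledPoissonLaw (κ / 2) α)
        (compoundPoisson T' ((nuRNe δ γ M k Set.univ)⁻¹ • nuRNe δ γ M k)) := rfl
    rw [hzeq, Eδ_mconv, Eδ_sp hκ0, ENNReal.ofReal_mul (Real.exp_nonneg _)]
    exact mul_le_mul_right hcp _
  -- the real-valued exponential estimate
  have hexp : Real.exp (γ / M) ≤ 1 + Real.exp (1 / M) / M * γ := by
    have h2 := Real.add_one_le_exp (-(γ / M))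
    have h3 : Real.exp (γ / M) * Real.exp (-(γ / M)) = 1 := by
      rw [← Real.exp_add]; simp
    have h1 : Real.exp (γ / M) * (1 - γ / M) ≤ 1 := by nlinarith [Real.exp_pos (γ / M)]
    have h4 : Real.exp (γ / M) ≤ Real.exp (1 / M) :=
      Real.exp_le_exp.2 ((div_le_div_iff_of_pos_right hM0).2 hγ1.le)
    have h5 : Real.exp (γ / M) * (γ / M) ≤ Real.exp (1 / M) * (γ / M) :=
      mul_le_mul_of_nonneg_right h4 (le_of_lt (div_pos hγ0 hM0))
    have h6 : Real.exp (1 / M) / M * γ = Real.exp (1 / M) * (γ / M) := by ring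
    rw [h6]
    nlinarith [h1, h5]
  have hub : Eδ δ (Z1Law δ γ κ α M k)
      ≤ ENNReal.ofReal ((1 + Real.exp (1 / M) / M * γ) *
          Real.exp (κ * (Real.exp (α * δ) - 1) / 2)) := by
    refine le_trans hEZ (ENNReal.ofReal_le_ofReal ?_)
    calc Real.exp (κ * (Real.exp (α * δ) - 1) / 2) * Real.exp (γ / M)
        = Real.exp (γ / M) * Real.exp (κ * (Real.exp (α * δ) - 1) / 2) := mul_comm _ _
      _ ≤ (1 + Real.exp (1 / M) / M * γ) * Real.exp (κ * (Real.exp (α * δ) - 1) / 2) :=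
          mul_le_mul_of_nonneg_right hexp (Real.exp_nonneg _)
  have hae : ∀ᵐ w ∂(Z1Law δ γ κ α M k), 0 ≤ w := by
    rw [ae_iff]
    convert Z1Law_neg_null (δ := δ) (γ := γ) (κ := κ) (α := α) hM0 hα.le using 2
    ext x; simp [not_le]
  calc mconv (nuR δ γ M) (Measure.map Neg.neg (Z1Law δ γ κ α M k)) A
      = mconv (Measure.map Neg.neg (Z1Law δ γ κ α M k)) (nuR δ γ M) A := by
        rw [mconv_comm]
    _ = ∫⁻ z, nuR δ γ M ((z + ·) ⁻¹' A) ∂(Measure.map Neg.neg (Z1Law δ γ κ α M k)) :=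
        mconv_apply _ _ hA
    _ = ∫⁻ w, nuR δ γ M ((-w + ·) ⁻¹' A) ∂(Z1Law δ γ κ α M k) := by
        rw [lintegral_map (measurable_shift_meas (nuR δ γ M) hA) measurable_neg]
    _ ≤ ∫⁻ w, ENNReal.ofReal (Real.exp (δ * w)) * nuR δ γ M A ∂(Z1Law δ γ κ α M k) := by
        refine lintegral_mono_ae ?_
        filter_upwards [hae] with w hw
        exact nuR_shift δ γ M hγ0.le hM0 hA hAM hw
    _ = Eδ δ (Z1Law δ γ κ α M k) * nuR δ γ M A :=
        lintegral_mul_const _ (measurable_expδ δ)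
    _ ≤ ENNReal.ofReal ((1 + Real.exp (1 / M) / M * γ) *
          Real.exp (κ * (Real.exp (α * δ) - 1) / 2)) * nuR δ γ M A :=
        mul_le_mul_left hub _
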